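/- Let G be a finite subgroup of the homeomorphism group of the circle. Then there exists a self-homeomorphism h of the circle such that for every g ∈ G the conjugate map h ∘ g ∘ h⁻¹ is an isometry of the circle. -/

import Mathlib

/-!
Lift each `g ∈ G` along `Circle.exp` to a continuous `F_g : ℝ → ℝ`. As `g` is a homeomorphism,
`F_g (t + 2π) = F_g t + 2π σ_g` with `σ_g = ±1`, and `σ_g F_g` is strictly increasing. Uniqueness
of lifts gives `F_a ∘ F_b = F_{ab} + c`, so `σ` is a character of `G`, and the average
`H = |G|⁻¹ ∑ₐ σ_a F_a` is a strictly increasing lift of degree one with `H ∘ F_b = σ_b H + C_b`.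
Hence `H` descends to a homeomorphism `h` of the circle conjugating `g` to `z ↦ e^{i C_g} z^{σ_g}`.
-/

/-- The group of self-homeomorphisms of the circle under composition. -/
noncomputable instance : Group (Circle ≃ₜ Circle) where
  mul f g := g.trans f
  one := Homeomorph.refl _
  inv := Homeomorph.symm
  mul_assoc _ _ _ := Homeomorph.ext fun _ => rfl
  one_mul _ := Homeomorph.ext fun _ => rfl
  mul_one _ := Homeomorph.ext fun _ => rfl
  inv_mul_cancel := Homeomorph.self_trans_symm

open Real Function Filter

theorem Int.cast_units_mul_self {R : Type*} [Ring R] (u : ℤˣ) : (u : R) * u = 1 := by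
  rw [← Int.cast_mul, Int.units_coe_mul_self, Int.cast_one]

namespace Circle

def HasDegree (F : ℝ → ℝ) (d : ℤ) : Prop :=
  ∀ t, F (t + 2 * π) = F t + d * (2 * π)

namespace HasDegree

variable {F F₁ F₂ : ℝ → ℝ} {d d₁ d₂ : ℤ}

theorem add_int_mul (hF : HasDegree F d) (k : ℤ) (t : ℝ) :
    F (t + k * (2 * π)) = F t + (d * k : ℤ) * (2 * π) := by
  induction k using Int.induction_on generalizing t with
  | zero => simp
  | succ k ih =>
    rw [Int.cast_add, Int.cast_one, add_one_mul, ← add_assoc, hF, ih]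
    push_cast; ring
  | pred k ih =>
    have := hF (t + (-k - 1 : ℤ) * (2 * π))
    rw [add_assoc, ← add_one_mul, Int.cast_sub, Int.cast_one, sub_add_cancel, ih] at this
    push_cast at this ⊢; linarith

theorem comp (h₁ : HasDegree F₁ d₁) (h₂ : HasDegree F₂ d₂) : HasDegree (F₁ ∘ F₂) (d₁ * d₂) := by
  intro t
  simp only [comp_apply, h₂ t, h₁.add_int_mul]

theorem of_eq_add_const {G : ℝ → ℝ} {c : ℝ} (hF : HasDegree F d) (hG : ∀ t, F t = G t + c) :
    HasDegree G d := fun t => by linarith [hF t, hG t, hG (t + 2 * π)]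

theorem unique {d' : ℤ} (h : HasDegree F d) (h' : HasDegree F d') : d = d' := by
  have := (h 0).symm.trans (h' 0)
  exact_mod_cast mul_right_cancel₀ (by positivity) (add_left_cancel this)

theorem surjective (hc : Continuous F) (hF : HasDegree F 1) : Surjective F := by
  have hper : Periodic (fun t => F t - t) (2 * π) := fun t => by simp [hF t]
  have hbdd := hper.isBounded_of_continuous (by positivity) (hc.sub continuous_id)
  obtain ⟨M, hM⟩ := hbdd.bddAbove
  obtain ⟨m, hm⟩ := hbdd.bddBelow
  refine hc.surjective ?_ ?_
  · refine tendsto_atTop_mono (fun t => ?_) (tendsto_atTop_add_const_right _ m tendsto_id)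
    linarith [hm ⟨t, rfl⟩, id_eq t]
  · refine tendsto_atBot_mono (fun t => ?_) (tendsto_atBot_add_const_right _ M tendsto_id)
    linarith [hM ⟨t, rfl⟩, id_eq t]

end HasDegree

theorem hasDegree_id : HasDegree id 1 := fun t => by simp

theorem exists_lift {f : Circle → Circle} (hf : Continuous f) :
    ∃ F : ℝ → ℝ, Continuous F ∧ ∀ t, exp (F t) = f (exp t) := by
  obtain ⟨F, ⟨-, hF⟩, -⟩ := isCoveringMap_exp.existsUnique_continuousMap_lifts
    ⟨f ∘ exp, by fun_prop⟩ 0 (Complex.arg (f (exp 0))) (exp_arg _)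
  exact ⟨F, F.continuous, congrFun hF⟩

theorem exists_eq_add_int_mul_of_exp_eq {F₁ F₂ : ℝ → ℝ} (h₁ : Continuous F₁)
    (h₂ : Continuous F₂) (h : ∀ t, exp (F₁ t) = exp (F₂ t)) :
    ∃ m : ℤ, ∀ t, F₁ t = F₂ t + m * (2 * π) := by
  obtain ⟨m, hm⟩ := exp_eq_exp.1 (h 0)
  refine ⟨m, congrFun (isCoveringMap_exp.eq_of_comp_eq h₁ (h₂.add continuous_const) ?_ 0 hm)⟩
  ext1 t
  simpa using h t

theorem exists_hasDegree_of_lift {F : ℝ → ℝ} {f : Circle → Circle} (hc : Continuous F)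
    (hF : ∀ t, exp (F t) = f (exp t)) : ∃ d, HasDegree F d :=
  exists_eq_add_int_mul_of_exp_eq (hc.comp (continuous_add_const _)) hc fun t => by
    simp only [hF, exp_add_two_pi]

theorem HasDegree.strictMono_units_mul {F : ℝ → ℝ} {σ : ℤˣ} (hF : HasDegree F σ)
    (hc : Continuous F) (hinj : Injective F) : StrictMono fun t => σ * F t := by
  have h2π : F (2 * π) = F 0 + σ * (2 * π) := by simpa using hF 0
  have hpos : (0 : ℝ) < 2 * π := by positivity
  rcases Int.units_eq_one_or σ with rfl | rfl <;> rcases hc.strictMono_of_inj hinj with h | h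
  · simpa using h
  · linarith [h hpos, show F (2 * π) = F 0 + 2 * π by simpa using h2π]
  · linarith [h hpos, show F (2 * π) = F 0 - 2 * π by simpa [sub_eq_add_neg] using h2π]
  · simpa using h.neg

theorem exists_lift_of_homeomorph (g : Circle ≃ₜ Circle) :
    ∃ (F : ℝ → ℝ) (σ : ℤˣ), Continuous F ∧ (∀ t, exp (F t) = g (exp t)) ∧ HasDegree F σ ∧
      StrictMono fun t => σ * F t := by
  obtain ⟨F, hFc, hF⟩ := exists_lift g.continuous
  obtain ⟨F', hF'c, hF'⟩ := exists_lift g.symm.continuous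
  obtain ⟨d, hd⟩ := exists_hasDegree_of_lift hFc hF
  obtain ⟨d', hd'⟩ := exists_hasDegree_of_lift hF'c hF'
  obtain ⟨m, hm⟩ : ∃ m : ℤ, ∀ t, F' (F t) = t + m * (2 * π) := by
    refine exists_eq_add_int_mul_of_exp_eq (hF'c.comp hFc) continuous_id fun t => ?_
    simp only [hF, hF', g.symm_apply_apply]
  have hd'd : d' * d = 1 := ((hd'.comp hd).of_eq_add_const hm).unique hasDegree_id
  have hinj : Injective F := fun s t hst => by linarith [hm s, hm t, congrArg F' hst]
  let σ : ℤˣ := ⟨d, d', by rw [mul_comm, hd'd], hd'd⟩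
  exact ⟨F, σ, hFc, hF, hd, hd.strictMono_units_mul (σ := σ) hFc hinj⟩

theorem exists_continuousMap_of_hasDegree {F : ℝ → ℝ} {d : ℤ} (hc : Continuous F)
    (hF : HasDegree F d) : ∃ f : C(Circle, Circle), ∀ t, f (exp t) = exp (F t) := by
  have hq := isCoveringMap_exp.isQuotientMap exp_surjective
  have hfactor : FactorsThrough (exp ∘ F) exp := fun s t hst => by
    obtain ⟨m, rfl⟩ := exp_eq_exp.1 hst
    simp only [comp_apply, hF.add_int_mul, exp_add, exp_int_mul_two_pi, mul_one]
  let g : C(ℝ, Circle) := ⟨exp ∘ F, by fun_prop⟩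
  exact ⟨hq.lift g hfactor, fun t => DFunLike.congr_fun (hq.lift_comp g hfactor) t⟩

theorem exists_homeomorph_of_hasDegree_one {H : ℝ → ℝ} (hc : Continuous H) (hm : StrictMono H)
    (hH : HasDegree H 1) : ∃ h : Circle ≃ₜ Circle, ∀ t, h (exp t) = exp (H t) := by
  let Φ : ℝ ≃ₜ ℝ := (hm.orderIsoOfSurjective H (hH.surjective hc)).toHomeomorph
  have hΦ : ⇑Φ = H := rfl
  have hΦsymm : HasDegree Φ.symm 1 := fun t => Φ.injective <| by
    rw [Φ.apply_symm_apply, hΦ, Int.cast_one, one_mul, hH, ← hΦ, Φ.apply_symm_apply, Int.cast_one,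
      one_mul]
  obtain ⟨f, hf⟩ := exists_continuousMap_of_hasDegree hc hH
  obtain ⟨f', hf'⟩ := exists_continuousMap_of_hasDegree Φ.symm.continuous hΦsymm
  refine ⟨⟨⟨f, f', fun x => ?_, fun x => ?_⟩, f.continuous, f'.continuous⟩, hf⟩ <;>
    obtain ⟨t, rfl⟩ := exp_surjective x
  · rw [hf, hf', ← hΦ, Φ.symm_apply_apply]
  · rw [hf', hf, ← hΦ, Φ.apply_symm_apply]

section SignedAverage

variable {ι : Type*} [Group ι] [Fintype ι] {F : ι → ℝ → ℝ} {σ : ι →* ℤˣ}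

variable (F σ) in
noncomputable def signedAverage (t : ℝ) : ℝ :=
  (∑ a, σ a * F a t) / Fintype.card ι

theorem continuous_signedAverage (hF : ∀ a, Continuous (F a)) :
    Continuous (signedAverage F σ) := by
  unfold signedAverage
  fun_prop

theorem strictMono_signedAverage (hF : ∀ a, StrictMono fun t => σ a * F a t) :
    StrictMono (signedAverage F σ) := fun _ _ hst =>
  div_lt_div_of_pos_right (Finset.sum_lt_sum_of_nonempty Finset.univ_nonempty fun a _ => hF a hst)
    (by positivity)

theorem hasDegree_signedAverage (hF : ∀ a, HasDegree (F a) (σ a)) :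
    HasDegree (signedAverage F σ) 1 := by
  intro t
  simp only [signedAverage, hF _ t, mul_add, ← mul_assoc, Int.cast_units_mul_self, one_mul,
    Finset.sum_add_distrib, Finset.sum_const, Finset.card_univ, nsmul_eq_mul, add_div]
  field_simp
  simp

theorem exists_signedAverage_comp (hcomp : ∀ a b, ∃ c, ∀ t, F a (F b t) = F (a * b) t + c)
    (b : ι) : ∃ C, ∀ t, signedAverage F σ (F b t) = σ b * signedAverage F σ t + C := by
  choose c hc using hcomp
  refine ⟨(∑ a, σ a * c a b) / Fintype.card ι, fun t => ?_⟩
  have hreindex : ∑ a, σ a * F (a * b) t = σ b * ∑ a, σ a * F a t := by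
    rw [Finset.mul_sum]
    refine Fintype.sum_equiv (Equiv.mulRight b) _ _ fun a => ?_
    simp only [Equiv.coe_mulRight, map_mul, Units.val_mul, Int.cast_mul]
    linear_combination (-(σ a : ℝ) * F (a * b) t) * Int.cast_units_mul_self (R := ℝ) (σ b)
  simp only [signedAverage, hc, mul_add, Finset.sum_add_distrib, hreindex]
  ring

end SignedAverage

theorem dist_eq (x y : Circle) : dist x y = dist (x : ℂ) y := rfl

theorem isometry_mul_left (a : Circle) : Isometry (a * ·) :=
  Isometry.of_dist_eq fun x y => by
    simp only [dist_eq, coe_mul, dist_eq_norm, ← mul_sub, norm_mul, norm_coe, one_mul]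

theorem isometry_inv : Isometry fun x : Circle => x⁻¹ :=
  Isometry.of_dist_eq fun x y => by
    simp only [dist_eq, coe_inv_eq_conj, Complex.dist_conj_conj]

theorem isometry_mul_zpow_units (a : Circle) (σ : ℤˣ) :
    Isometry fun x : Circle => a * x ^ (σ : ℤ) := by
  rcases Int.units_eq_one_or σ with rfl | rfl
  · simpa using isometry_mul_left a
  · simp only [Units.val_neg, Units.val_one, zpow_neg, zpow_one]
    exact (isometry_mul_left a).comp isometry_inv

end Circle

theorem stmt_4 (G : Subgroup (Circle ≃ₜ Circle)) (hG : Finite G) :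
    ∃ h : Circle ≃ₜ Circle, ∀ g ∈ G,
      Isometry (fun x : Circle => h (g (h.symm x))) := by
  have := Fintype.ofFinite G
  choose F σ hFc hFexp hFdeg hFmono using fun g : G => Circle.exists_lift_of_homeomorph g
  have hcomp : ∀ a b : G, ∃ c : ℝ, ∀ t, F a (F b t) = F (a * b) t + c := fun a b => by
    obtain ⟨m, hm⟩ := Circle.exists_eq_add_int_mul_of_exp_eq ((hFc a).comp (hFc b))
      (hFc (a * b)) fun t => by simp only [comp_apply, hFexp]; rfl
    exact ⟨_, hm⟩
  have hσ : ∀ a b : G, σ (a * b) = σ a * σ b := fun a b => by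
    obtain ⟨m, hm⟩ := hcomp a b
    exact Units.ext (((hFdeg a).comp (hFdeg b)).of_eq_add_const hm |>.unique (hFdeg (a * b))).symm
  let χ : G →* ℤˣ := MonoidHom.mk' σ hσ
  obtain ⟨h, hh⟩ := Circle.exists_homeomorph_of_hasDegree_one
    (Circle.continuous_signedAverage (σ := χ) hFc) (Circle.strictMono_signedAverage hFmono)
    (Circle.hasDegree_signedAverage hFdeg)
  refine ⟨h, fun g hg => ?_⟩
  obtain ⟨C, hC⟩ := Circle.exists_signedAverage_comp (F := F) (σ := χ) hcomp ⟨g, hg⟩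
  convert Circle.isometry_mul_zpow_units (Circle.exp C) (σ ⟨g, hg⟩) using 1
  funext x
  obtain ⟨t, rfl⟩ := (h.surjective.comp Circle.exp_surjective) x
  simp only [comp_apply, h.symm_apply_apply]
  rw [← hFexp ⟨g, hg⟩, hh, hh, hC, MonoidHom.mk'_apply, Circle.exp_add, Circle.exp_intCast_mul,
    mul_comm]
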